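/- arXiv:2107.10040 — 9 statements merged into one kernel-verified Lean document; each statement's English description precedes it below -/
import Mathlib

section
/- Let T be a compact topological space, f a continuous real-valued function on T, V a linear subspace of C(T,ℝ), and ṽ ∈ V. Let H be a nonempty subset of T and σ : H → {−1,+1} a sign function such that (H,σ) is an H-set for V. If μ := inf_{h∈H} (f(h) − ṽ(h))·σ(h) is positive, then μ ≤ inf_{v∈V} ‖f − v‖_∞ ≤ ‖f − ṽ‖_∞, where ‖·‖_∞ denotes the supremum norm on C(T,ℝ). -/
lemma hset_abs_le {T : Type*} [TopologicalSpace T] [CompactSpace T]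
    (g : C(T, ℝ)) (σ : T → ℝ) (h : T) (hs : σ h = 1 ∨ σ h = -1) :
    |g h * σ h| ≤ ‖g‖ := by
  have : |g h * σ h| = |g h| := by
    rcases hs with hs | hs <;> simp [abs_mul, hs]
  rw [this]
  exact ContinuousMap.norm_coe_le_norm g h

/-- Collatz' lower bound via an H-set: if `(H, σ)` is an
H-set for the subspace `V ⊆ C(T, ℝ)` (no `v ∈ V` makes all `σ h * v h`
negative), and `μ = inf_{h ∈ H} (f h - ṽ h) * σ h > 0`, then
`μ ≤ inf_{v ∈ V} ‖f - v‖_∞ ≤ ‖f - ṽ‖_∞`. -/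
theorem hset_lower_bound {T : Type*} [TopologicalSpace T] [CompactSpace T]
    (f : C(T, ℝ)) (V : Submodule ℝ C(T, ℝ)) (vt : C(T, ℝ)) (hvt : vt ∈ V)
    (H : Set T) (hH : H.Nonempty) (σ : T → ℝ) (hσ : ∀ h ∈ H, σ h = 1 ∨ σ h = -1)
    (hHset : ¬ ∃ v ∈ V, ∀ h ∈ H, σ h * v h < 0)
    (hμ : 0 < sInf ((fun h => (f h - vt h) * σ h) '' H)) :
    sInf ((fun h => (f h - vt h) * σ h) '' H)
        ≤ sInf ((fun v => ‖f - v‖) '' (V : Set C(T, ℝ))) ∧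
      sInf ((fun v => ‖f - v‖) '' (V : Set C(T, ℝ))) ≤ ‖f - vt‖ := by
  set μ := sInf ((fun h => (f h - vt h) * σ h) '' H) with hμdef
  have hbdd : BddBelow ((fun h => (f h - vt h) * σ h) '' H) := by
    refine ⟨-‖f - vt‖, ?_⟩
    rintro x ⟨h, hh, rfl⟩
    have h1 : |(f - vt) h * σ h| ≤ ‖f - vt‖ := hset_abs_le _ _ _ (hσ h hh)
    simp only [ContinuousMap.sub_apply] at h1
    dsimp only
    linarith [neg_abs_le ((f h - vt h) * σ h)]
  constructor
  · refine le_csInf ⟨‖f - vt‖, vt, hvt, rfl⟩ ?_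
    rintro x ⟨v, hv, rfl⟩
    by_contra hlt
    push_neg at hlt
    apply hHset
    refine ⟨vt - v, sub_mem hvt hv, fun h hh => ?_⟩
    have hμle : μ ≤ (f h - vt h) * σ h := csInf_le hbdd ⟨h, hh, rfl⟩
    have habs : |(f - v) h * σ h| ≤ ‖f - v‖ := hset_abs_le _ _ _ (hσ h hh)
    simp only [ContinuousMap.sub_apply] at habs
    have h2 : (f h - v h) * σ h ≤ ‖f - v‖ := (le_abs_self _).trans habs
    have : σ h * (vt h - v h) < 0 := by nlinarith
    simpa using this
  · exact csInf_le ⟨0, by rintro x ⟨v, hv, rfl⟩; exact norm_nonneg _⟩ ⟨vt, hvt, rfl⟩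
end

section
/- Let T be a set, v_1,…,v_n : T → ℝ functions spanning a subspace V, H = {h_1,…,h_N} ⊆ T a finite set of distinct points with N ≥ 1, and σ_1,…,σ_N ∈ {−1,+1} signs. Then (H,σ) is an H-set for V if and only if there exists a vector w ∈ ℝ^N with w_k ≥ 0 for all k, w ≠ 0, and ∑_{k=1}^N w_k v_i(h_k) σ_k = 0 for all i = 1,…,n. -/
open scoped BigOperators

/-- For `V = span {v_1, …, v_n}`, `H = {h_1, …, h_N}` distinct
points with signs `σ_k ∈ {−1, +1}`, the pair `(H, σ)` is an H-set for `V`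
(no `g ∈ V` makes all `σ k * g (h k)` negative) if and only if there is a
nonzero nonnegative `w ∈ ℝ^N` with `∑ k, w k * v i (h k) * σ k = 0` for all `i`. -/
theorem hset_iff_exists_nonneg_annihilating_weights
    {T : Type*} {n N : ℕ} (hN : 1 ≤ N)
    (v : Fin n → T → ℝ) (h : Fin N → T) (hinj : Function.Injective h)
    (σ : Fin N → ℝ) (hσ : ∀ k, σ k = 1 ∨ σ k = -1) :
    (¬ ∃ g ∈ Submodule.span ℝ (Set.range v), ∀ k : Fin N, σ k * g (h k) < 0) ↔
      ∃ w : Fin N → ℝ, (∀ k, 0 ≤ w k) ∧ w ≠ 0 ∧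
        ∀ i : Fin n, ∑ k, w k * v i (h k) * σ k = 0 := by
  constructor
  · intro hns
    -- the linear map sending coefficients `c` to `(k ↦ (∑ i, c i * v i (h k)) * σ k)`
    set M : (Fin n → ℝ) →ₗ[ℝ] (Fin N → ℝ) :=
      { toFun := fun c k => (∑ i, c i * v i (h k)) * σ k
        map_add' := by
          intro a b; funext k
          simp [add_mul, Finset.sum_add_distrib]
        map_smul' := by
          intro r a; funext k
          simp only [Pi.smul_apply, smul_eq_mul, RingHom.id_apply]
          rw [show (∑ i, r * a i * v i (h k)) = r * ∑ i, a i * v i (h k) by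
            rw [Finset.mul_sum]; exact Finset.sum_congr rfl fun i _ => by ring]
          ring } with hM
    set s : Set (Fin N → ℝ) := {x | ∀ k, x k < 0} with hs
    set t : Set (Fin N → ℝ) := Set.range M with ht
    have hsconv : Convex ℝ s := by
      intro x hx y hy a b ha hb hab
      intro k
      simp only [Pi.add_apply, Pi.smul_apply, smul_eq_mul]
      rcases eq_or_lt_of_le ha with rfl | ha'
      · have hb1 : b = 1 := by linarith
        simpa [hb1] using hy k
      · have h1 : a * x k < 0 := mul_neg_of_pos_of_neg ha' (hx k)
        have h2 : b * y k ≤ 0 := mul_nonpos_of_nonneg_of_nonpos hb (le_of_lt (hy k))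
        linarith
    have hsopen : IsOpen s := by
      have : s = ⋂ k, {x : Fin N → ℝ | x k < 0} := by
        ext x; simp [hs]
      rw [this]
      exact isOpen_iInter_of_finite fun k =>
        isOpen_Iio.preimage (continuous_apply k)
    have htconv : Convex ℝ t := (LinearMap.range M).convex
    have hdisj : Disjoint s t := by
      rw [Set.disjoint_left]
      rintro x hxs ⟨c, rfl⟩
      refine hns ⟨∑ i, c i • v i, ?_, fun k => ?_⟩
      · exact Submodule.sum_smul_mem _ _ fun i _ => Submodule.subset_span ⟨i, rfl⟩
      · have := hxs k
        simp only [hM, LinearMap.coe_mk, AddHom.coe_mk] at this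
        have heq : (∑ i, c i • v i) (h k) = ∑ i, c i * v i (h k) := by
          simp [Finset.sum_apply]
        rw [show ((∑ i, c i • v i) : T → ℝ) (h k) = ∑ i, c i * v i (h k) from heq]
        calc σ k * ∑ i, c i * v i (h k) = (∑ i, c i * v i (h k)) * σ k := by ring
          _ < 0 := this
    obtain ⟨f, u, hfs, hft⟩ := geometric_hahn_banach_open hsconv hsopen htconv hdisj
    have h0t : (0 : Fin N → ℝ) ∈ t := ⟨0, by simp⟩
    have hu0 : u ≤ 0 := by simpa using hft 0 h0t
    -- f vanishes on t
    have hft0 : ∀ x ∈ t, f x = 0 := by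
      rintro x ⟨c, rfl⟩
      by_contra hfx0
      have hmem : ((u - 1) / f (M c)) • M c ∈ t := ⟨((u - 1) / f (M c)) • c, by rw [map_smul]⟩
      have := hft _ hmem
      rw [map_smul, smul_eq_mul, div_mul_cancel₀ _ hfx0] at this
      linarith
    set w : Fin N → ℝ := fun k => f (Pi.single k 1) with hw
    have hsingle : ∀ (k : Fin N) (c : ℝ), f (Pi.single k c) = c * w k := by
      intro k c
      have : (Pi.single k c : Fin N → ℝ) = c • (Pi.single k 1 : Fin N → ℝ) := by
        funext j
        by_cases hj : j = k <;> simp [Pi.single_apply, hj]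
      rw [this, map_smul, smul_eq_mul]
    have hfx : ∀ x : Fin N → ℝ, f x = ∑ k, x k * w k := by
      intro x
      conv_lhs => rw [← Finset.univ_sum_single x]
      rw [map_sum]
      exact Finset.sum_congr rfl fun k _ => hsingle k (x k)
    -- the constant -1 function is in s
    have hconst : (fun _ : Fin N => (-1 : ℝ)) ∈ s := fun k => by norm_num
    have ha : f (fun _ => (-1 : ℝ)) < 0 := lt_of_lt_of_le (hfs _ hconst) hu0
    refine ⟨w, ?_, ?_, ?_⟩
    · -- nonnegativity
      intro k
      by_contra hwk
      push_neg at hwk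
      set a := f (fun _ => (-1 : ℝ)) with haa
      have hd : 0 < (1 - a) / (-w k) := div_pos (by linarith) (by linarith)
      set τ : ℝ := 1 + (1 - a) / (-w k) with hτ
      have hτpos : 0 < τ := by rw [hτ]; linarith
      set x : Fin N → ℝ := (fun _ => (-1 : ℝ)) + Pi.single k (1 - τ) with hx
      have hxs : x ∈ s := by
        intro j
        by_cases hj : j = k
        · subst hj; simp [hx]; linarith
        · simp [hx, Pi.single_eq_of_ne hj]
      have hfxval : f x = a + (1 - τ) * w k := by
        rw [hx, map_add, hsingle]
      have h1τ : (1 - τ) * w k = 1 - a := by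
        rw [hτ]
        have hwk' : -w k ≠ 0 := by linarith
        have hwk'' : w k ≠ 0 := ne_of_lt hwk
        field_simp
        ring
      have := lt_of_lt_of_le (hfs x hxs) hu0
      rw [hfxval, h1τ] at this
      linarith
    · -- nonzero
      intro hw0
      have : f (fun _ => (-1 : ℝ)) = 0 := by
        rw [hfx]
        simp [show w = 0 from hw0]
      linarith
    · -- annihilation
      intro i
      have hcol : (fun k => v i (h k) * σ k) ∈ t := by
        refine ⟨Pi.single i 1, ?_⟩
        funext k
        simp [hM, Pi.single_apply, Finset.sum_ite_eq, mul_comm]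
      have := hft0 _ hcol
      rw [hfx] at this
      calc ∑ k, w k * v i (h k) * σ k = ∑ k, v i (h k) * σ k * w k := by
            exact Finset.sum_congr rfl fun k _ => by ring
        _ = 0 := this
  · rintro ⟨w, hw0, hwne, hannih⟩ ⟨g, hg, hneg⟩
    obtain ⟨c, hc⟩ := (Submodule.mem_span_range_iff_exists_fun ℝ).mp hg
    have hgk : ∀ k, g (h k) = ∑ i, c i * v i (h k) := by
      intro k
      rw [← hc]
      simp [Finset.sum_apply]
    have hS : ∑ k, w k * (σ k * g (h k)) = 0 := by
      calc ∑ k, w k * (σ k * g (h k))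
          = ∑ k, ∑ i, c i * (w k * v i (h k) * σ k) := by
            refine Finset.sum_congr rfl fun k _ => ?_
            rw [hgk k, Finset.mul_sum, Finset.mul_sum]
            exact Finset.sum_congr rfl fun i _ => by ring
        _ = ∑ i, c i * ∑ k, w k * v i (h k) * σ k := by
            rw [Finset.sum_comm]
            exact Finset.sum_congr rfl fun i _ => by rw [Finset.mul_sum]
        _ = 0 := by simp [hannih]
    obtain ⟨k0, hk0⟩ := Function.ne_iff.mp hwne
    have hk0pos : 0 < w k0 := lt_of_le_of_ne (hw0 k0) (Ne.symm hk0)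
    have hlt : ∑ k, w k * (σ k * g (h k)) < 0 := by
      have : ∑ k, w k * (σ k * g (h k)) < ∑ k : Fin N, (0 : ℝ) := by
        refine Finset.sum_lt_sum (fun k _ => mul_nonpos_of_nonneg_of_nonpos (hw0 k)
          (le_of_lt (hneg k))) ⟨k0, Finset.mem_univ _, ?_⟩
        exact mul_neg_of_pos_of_neg hk0pos (hneg k0)
      simpa using this
    linarith
end

section
/- Let T be a set, v_1,…,v_n : T → ℝ functions spanning a subspace V, H = {h_1,…,h_N} ⊆ T a finite set of distinct points with N ≥ 1, and σ_1,…,σ_N ∈ {−1,+1} signs. Then (H,σ) is an H-set for V if and only if the maximum of ∑_{k=1}^N w_k over all w ∈ ℝ^N satisfying 0 ≤ w_k ≤ 1 for all k and ∑_{k=1}^N w_k v_i(h_k) σ_k = 0 for all i = 1,…,n, is positive. -/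
open scoped BigOperators

/-- For `V = span {v_1, …, v_n}`, distinct points
`h_1, …, h_N` with signs `σ_k ∈ {−1, +1}`: the linear program
`max ∑ k, w k` subject to `0 ≤ w k ≤ 1` and `∑ k, w k * v i (h k) * σ k = 0`
for all `i` has a maximum, and `(H, σ)` is an H-set for `V` if and only if
this maximum is positive. -/
theorem hset_iff_lp_max_positive
    {T : Type*} {n N : ℕ} (hN : 1 ≤ N)
    (v : Fin n → T → ℝ) (h : Fin N → T) (hinj : Function.Injective h)
    (σ : Fin N → ℝ) (hσ : ∀ k, σ k = 1 ∨ σ k = -1) :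
    ∃ m : ℝ,
      IsGreatest {s : ℝ | ∃ w : Fin N → ℝ, (∀ k, 0 ≤ w k ∧ w k ≤ 1) ∧
          (∀ i : Fin n, ∑ k, w k * v i (h k) * σ k = 0) ∧ s = ∑ k, w k} m ∧
      ((¬ ∃ g ∈ Submodule.span ℝ (Set.range v), ∀ k : Fin N, σ k * g (h k) < 0) ↔
        0 < m) := by
  classical
  set S : Set (Fin N → ℝ) := {w | (∀ k, 0 ≤ w k ∧ w k ≤ 1) ∧
    ∀ i : Fin n, ∑ k, w k * v i (h k) * σ k = 0} with hSdef
  have hS0 : (0 : Fin N → ℝ) ∈ S := by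
    constructor
    · intro k; simp
    · intro i; simp
  have hSclosed : IsClosed S := by
    have h1 : IsClosed {w : Fin N → ℝ | ∀ k, 0 ≤ w k ∧ w k ≤ 1} := by
      have : {w : Fin N → ℝ | ∀ k, 0 ≤ w k ∧ w k ≤ 1} =
          ⋂ k, ((fun w : Fin N → ℝ => w k) ⁻¹' Set.Icc 0 1) := by
        ext w; simp [Set.mem_Icc]
      rw [this]
      exact isClosed_iInter fun k => isClosed_Icc.preimage (continuous_apply k)
    have h2 : IsClosed {w : Fin N → ℝ | ∀ i : Fin n, ∑ k, w k * v i (h k) * σ k = 0} := by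
      have : {w : Fin N → ℝ | ∀ i : Fin n, ∑ k, w k * v i (h k) * σ k = 0} =
          ⋂ i, ((fun w : Fin N → ℝ => ∑ k, w k * v i (h k) * σ k) ⁻¹' {0}) := by
        ext w; simp
      rw [this]
      refine isClosed_iInter fun i => (isClosed_singleton).preimage ?_
      exact continuous_finset_sum _ fun k _ =>
        (((continuous_apply k).mul continuous_const).mul continuous_const)
    exact h1.inter h2
  have hSsub : S ⊆ Set.Icc 0 1 := fun w hw =>
    ⟨fun k => (hw.1 k).1, fun k => (hw.1 k).2⟩
  have hScomp : IsCompact S := IsCompact.of_isClosed_subset isCompact_Icc hSclosed hSsub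
  have hcont : Continuous (fun w : Fin N → ℝ => ∑ k, w k) :=
    continuous_finset_sum _ fun k _ => continuous_apply k
  obtain ⟨w₀, hw₀S, hw₀max⟩ := hScomp.exists_isMaxOn ⟨0, hS0⟩ hcont.continuousOn
  have hub : ∀ s ∈ {s : ℝ | ∃ w : Fin N → ℝ, (∀ k, 0 ≤ w k ∧ w k ≤ 1) ∧
      (∀ i : Fin n, ∑ k, w k * v i (h k) * σ k = 0) ∧ s = ∑ k, w k}, s ≤ ∑ k, w₀ k := by
    rintro s ⟨w, hw1, hw2, rfl⟩
    exact hw₀max (⟨hw1, hw2⟩ : w ∈ S)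
  refine ⟨∑ k, w₀ k, ⟨⟨w₀, hw₀S.1, hw₀S.2, rfl⟩, hub⟩, ?_, ?_⟩
  · -- H-set → 0 < m
    intro hHset
    by_contra hle
    push_neg at hle
    -- every feasible w has sum ≤ 0, hence w = 0
    have hnofeas : ∀ w : Fin N → ℝ, (∀ k, 0 ≤ w k) → (∀ k, w k ≤ 1) →
        (∀ i : Fin n, ∑ k, w k * v i (h k) * σ k = 0) → ∑ k, w k ≤ 0 := by
      intro w hw0 hw1 hweq
      exact le_trans (hub _ ⟨w, fun k => ⟨hw0 k, hw1 k⟩, hweq, rfl⟩) hle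
    -- Set up separation in Fin n → ℝ
    set a : Fin N → (Fin n → ℝ) := fun k i => v i (h k) * σ k with hadef
    set Δ : Set (Fin N → ℝ) := {w | (∀ k, 0 ≤ w k) ∧ ∑ k, w k = 1} with hΔdef
    have hΔsub : Δ ⊆ Set.Icc 0 1 := by
      rintro w ⟨hw0, hw1⟩
      refine ⟨fun k => hw0 k, fun k => ?_⟩
      calc w k ≤ ∑ j, w j := Finset.single_le_sum (fun j _ => hw0 j) (Finset.mem_univ k)
        _ = 1 := hw1
    have hΔclosed : IsClosed Δ := by
      have h1 : IsClosed {w : Fin N → ℝ | ∀ k, 0 ≤ w k} := by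
        have : {w : Fin N → ℝ | ∀ k, 0 ≤ w k} =
            ⋂ k, ((fun w : Fin N → ℝ => w k) ⁻¹' Set.Ici 0) := by ext w; simp
        rw [this]
        exact isClosed_iInter fun k => isClosed_Ici.preimage (continuous_apply k)
      exact h1.inter ((isClosed_singleton (x := (1:ℝ))).preimage hcont)
    have hΔcomp : IsCompact Δ := IsCompact.of_isClosed_subset isCompact_Icc hΔclosed hΔsub
    set C : Set (Fin n → ℝ) := (fun w : Fin N → ℝ => ∑ k, w k • a k) '' Δ with hCdef
    have hCcomp : IsCompact C :=
      hΔcomp.image (continuous_finset_sum _ fun k _ => (continuous_apply k).smul continuous_const)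
    have hCconv : Convex ℝ C := by
      rintro x ⟨wx, ⟨hwx0, hwx1⟩, rfl⟩ y ⟨wy, ⟨hwy0, hwy1⟩, rfl⟩ s t hs ht hst
      refine ⟨fun k => s * wx k + t * wy k, ⟨fun k => add_nonneg (mul_nonneg hs (hwx0 k))
        (mul_nonneg ht (hwy0 k)), ?_⟩, ?_⟩
      · simp only [Finset.sum_add_distrib, ← Finset.mul_sum, hwx1, hwy1, mul_one, hst]
      · rw [Finset.smul_sum, Finset.smul_sum, ← Finset.sum_add_distrib]
        refine Finset.sum_congr rfl fun k _ => ?_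
        simp [add_smul, mul_smul]
    have hC0 : (0 : Fin n → ℝ) ∉ C := by
      rintro ⟨w, ⟨hw0, hw1⟩, hw⟩
      have hfe : ∀ i : Fin n, ∑ k, w k * v i (h k) * σ k = 0 := by
        intro i
        have := congrFun hw i
        simp only [Finset.sum_apply, Pi.smul_apply, smul_eq_mul, Pi.zero_apply] at this
        rw [← this]
        refine Finset.sum_congr rfl fun k _ => ?_
        rw [hadef]; ring
      have := hnofeas w hw0 (fun k => (hΔsub ⟨hw0, hw1⟩).2 k) hfe
      rw [hw1] at this; linarith
    obtain ⟨f, u, hfC, hfu⟩ := geometric_hahn_banach_closed_point hCconv hCcomp.isClosed hC0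
    have hu0 : u < 0 := by simpa using hfu
    have haC : ∀ k, a k ∈ C := by
      intro k
      refine ⟨Pi.single k 1, ⟨fun j => ?_, ?_⟩, ?_⟩
      · rcases eq_or_ne j k with rfl | hjk
        · simp
        · simp [Pi.single_apply, hjk]
      · simp
      · show (∑ j, (Pi.single k 1 : Fin N → ℝ) j • a j) = a k
        rw [Finset.sum_eq_single k]
        · simp
        · intro j _ hjk; simp [Pi.single_apply, hjk]
        · intro hk; exact absurd (Finset.mem_univ k) hk
    set c : Fin n → ℝ := fun i => f (fun j => if i = j then 1 else 0) with hcdef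
    set g : T → ℝ := ∑ i, c i • v i with hgdef
    refine hHset ⟨g, ?_, ?_⟩
    · exact Submodule.sum_mem _ fun i _ =>
        Submodule.smul_mem _ _ (Submodule.subset_span ⟨i, rfl⟩)
    · intro k
      have hfa : f (a k) < 0 := lt_trans (hfC _ (haC k)) hu0
      have hexp : f (a k) = ∑ i, a k i * c i := by
        conv_lhs => rw [pi_eq_sum_univ (a k), map_sum]
        refine Finset.sum_congr rfl fun i _ => ?_
        rw [map_smul, smul_eq_mul]
      have hg : σ k * g (h k) = f (a k) := by
        rw [hexp, hgdef]
        simp only [Finset.sum_apply, Pi.smul_apply, smul_eq_mul, Finset.mul_sum]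
        refine Finset.sum_congr rfl fun i _ => ?_
        rw [hadef]; ring
      rw [hg]; exact hfa
  · -- 0 < m → H-set
    intro hm
    rintro ⟨g, hgspan, hglt⟩
    obtain ⟨c, hc⟩ := (Submodule.mem_span_range_iff_exists_fun ℝ).1 hgspan
    -- key: ∑ k, w₀ k * σ k * g (h k) = 0
    have hkey : ∑ k, w₀ k * (σ k * g (h k)) = 0 := by
      have : ∀ k, w₀ k * (σ k * g (h k)) = ∑ i, c i * (w₀ k * v i (h k) * σ k) := by
        intro k
        rw [← hc]
        simp only [Finset.sum_apply, Pi.smul_apply, smul_eq_mul, Finset.mul_sum]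
        refine Finset.sum_congr rfl fun i _ => ?_
        ring
      rw [Finset.sum_congr rfl fun k _ => this k, Finset.sum_comm]
      refine Finset.sum_eq_zero fun i _ => ?_
      rw [← Finset.mul_sum, hw₀S.2 i, mul_zero]
    -- but this sum is negative
    obtain ⟨k₀, hk₀⟩ : ∃ k, 0 < w₀ k := by
      by_contra hall
      push_neg at hall
      have : ∑ k, w₀ k = 0 := le_antisymm (Finset.sum_nonpos fun k _ => hall k)
        (Finset.sum_nonneg fun k _ => (hw₀S.1 k).1)
      rw [this] at hm; exact lt_irrefl 0 hm
    have hneg : ∑ k, w₀ k * (σ k * g (h k)) < 0 := by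
      have := Finset.sum_lt_sum (f := fun k => w₀ k * (σ k * g (h k))) (g := fun _ => (0:ℝ))
        (fun k _ => mul_nonpos_of_nonneg_of_nonpos (hw₀S.1 k).1 (hglt k).le)
        ⟨k₀, Finset.mem_univ k₀, mul_neg_of_pos_of_neg hk₀ (hglt k₀)⟩
      simpa using this
    rw [hkey] at hneg; exact lt_irrefl 0 hneg
end

section
/- Let B be a real N×n matrix with N ≥ 1 and f ∈ ℝ^N. Then the minimum over x ∈ ℝⁿ of ‖f − Bx‖_∞ (the maximum absolute component of f − Bx) exists, the maximum of fᵀw over all w ∈ ℝ^N with Bᵀw = 0 and ‖w‖₁ ≤ 1 exists, and the two optimal values are equal: min_{x∈ℝⁿ} ‖f − Bx‖_∞ = max { fᵀw : w ∈ ℝ^N, Bᵀw = 0, ‖w‖₁ ≤ 1 }. -/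
open scoped BigOperators

-- auxiliary: any linear functional on Fin N → ℝ is given by coefficients
lemma linmap_eq_sum {N : ℕ} (L : (Fin N → ℝ) →ₗ[ℝ] ℝ) (v : Fin N → ℝ) :
    L v = ∑ k, v k * L (Pi.single k 1) := by
  conv_lhs => rw [pi_eq_sum_univ v, map_sum]
  refine Finset.sum_congr rfl fun k _ => ?_
  rw [map_smul, smul_eq_mul]
  have : (fun j => if k = j then (1:ℝ) else 0) = Pi.single k 1 := by
    funext j; simp [Pi.single_apply, eq_comm]
  rw [this]

lemma norm_eq_sup' {N : ℕ} (hne : (Finset.univ : Finset (Fin N)).Nonempty)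
    (v : Fin N → ℝ) :
    ‖v‖ = Finset.univ.sup' hne (fun k => |v k|) := by
  obtain ⟨k0, _⟩ := hne
  refine le_antisymm ?_ ?_
  · refine (pi_norm_le_iff_of_nonneg ?_).2 fun k => ?_
    · exact le_trans (abs_nonneg (v k0)) (Finset.le_sup' (fun k => |v k|) (Finset.mem_univ k0))
    · simpa [Real.norm_eq_abs] using Finset.le_sup' (fun k => |v k|) (Finset.mem_univ k)
  · exact Finset.sup'_le _ _ fun k _ => by
      simpa [Real.norm_eq_abs] using norm_le_pi_norm v k

/-- (LP duality of discrete Chebyshev approximation.)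
For a real `N × n` matrix `B` (`N ≥ 1`) and data `f ∈ ℝ^N`, the minimum of
`‖f - Bx‖_∞` over `x ∈ ℝⁿ` and the maximum of `fᵀ w` over
`{w : Bᵀ w = 0, ‖w‖₁ ≤ 1}` both exist and coincide. -/
theorem discrete_chebyshev_duality
    {N n : ℕ} (hN : 0 < N) (B : Matrix (Fin N) (Fin n) ℝ) (f : Fin N → ℝ) :
    ∃ η : ℝ,
      IsLeast {r : ℝ | ∃ x : Fin n → ℝ,
          r = Finset.univ.sup' (Finset.univ_nonempty_iff.mpr ⟨⟨0, hN⟩⟩)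
                (fun k => |f k - B.mulVec x k|)} η ∧
      IsGreatest {r : ℝ | ∃ w : Fin N → ℝ,
          (∀ i : Fin n, ∑ k, B k i * w k = 0) ∧ (∑ k, |w k|) ≤ 1 ∧
          r = ∑ k, f k * w k} η := by
  classical
  set hne : (Finset.univ : Finset (Fin N)).Nonempty :=
    Finset.univ_nonempty_iff.mpr ⟨⟨0, hN⟩⟩ with hne_def
  set S : Submodule ℝ (Fin N → ℝ) := LinearMap.range B.mulVecLin with hS
  have hSclosed : IsClosed (S : Set (Fin N → ℝ)) := S.closed_of_finiteDimensional
  have hSne : (S : Set (Fin N → ℝ)).Nonempty := ⟨0, S.zero_mem⟩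
  set η : ℝ := Metric.infDist f (S : Set (Fin N → ℝ)) with hη
  -- minimizer
  obtain ⟨y, hyS, hydist⟩ := hSclosed.exists_infDist_eq_dist hSne f
  obtain ⟨x₀, hx₀⟩ := hyS
  have hx₀' : B.mulVec x₀ = y := hx₀
  have hmin : η = ‖f - B.mulVec x₀‖ := by
    rw [hη, hydist, hx₀', dist_eq_norm]
  have hsup : ∀ x : Fin n → ℝ,
      Finset.univ.sup' hne (fun k => |f k - B.mulVec x k|) = ‖f - B.mulVec x‖ := by
    intro x
    rw [norm_eq_sup' hne]
    rfl
  have hη_nonneg : 0 ≤ η := Metric.infDist_nonneg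
  have habs : ∀ k, |f k - B.mulVec x₀ k| ≤ η := by
    intro k
    rw [hmin]
    simpa [Real.norm_eq_abs] using norm_le_pi_norm (f - B.mulVec x₀) k
  -- primal IsLeast
  have hleast : IsLeast {r : ℝ | ∃ x : Fin n → ℝ,
      r = Finset.univ.sup' hne (fun k => |f k - B.mulVec x k|)} η := by
    constructor
    · exact ⟨x₀, by rw [hsup, hmin]⟩
    · rintro r ⟨x, rfl⟩
      rw [hsup]
      have : B.mulVec x ∈ (S : Set (Fin N → ℝ)) := ⟨x, rfl⟩
      calc η ≤ dist f (B.mulVec x) := Metric.infDist_le_dist_of_mem this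
        _ = ‖f - B.mulVec x‖ := dist_eq_norm _ _
  -- weak duality : upper bound
  have hub : ∀ r ∈ {r : ℝ | ∃ w : Fin N → ℝ,
      (∀ i : Fin n, ∑ k, B k i * w k = 0) ∧ (∑ k, |w k|) ≤ 1 ∧
      r = ∑ k, f k * w k}, r ≤ η := by
    rintro r ⟨w, hw0, hw1, rfl⟩
    have hBx : ∑ k, B.mulVec x₀ k * w k = 0 := by
      simp only [Matrix.mulVec, dotProduct, Finset.sum_mul]
      rw [Finset.sum_comm]
      refine Finset.sum_eq_zero fun i _ => ?_
      have := hw0 i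
      calc ∑ k, B k i * x₀ i * w k = x₀ i * ∑ k, B k i * w k := by
            rw [Finset.mul_sum]; apply Finset.sum_congr rfl; intro k _; ring
        _ = 0 := by rw [hw0 i, mul_zero]
    have key : ∑ k, f k * w k = ∑ k, (f k - B.mulVec x₀ k) * w k := by
      rw [Finset.sum_congr rfl (fun k _ => by ring : ∀ k ∈ Finset.univ,
        (f k - B.mulVec x₀ k) * w k = f k * w k - B.mulVec x₀ k * w k),
        Finset.sum_sub_distrib, hBx, sub_zero]
    rw [key]
    calc ∑ k, (f k - B.mulVec x₀ k) * w k ≤ ∑ k, η * |w k| := by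
          refine Finset.sum_le_sum fun k _ => ?_
          calc (f k - B.mulVec x₀ k) * w k ≤ |(f k - B.mulVec x₀ k) * w k| := le_abs_self _
            _ = |f k - B.mulVec x₀ k| * |w k| := abs_mul _ _
            _ ≤ η * |w k| := mul_le_mul_of_nonneg_right (habs k) (abs_nonneg _)
      _ = η * ∑ k, |w k| := by rw [Finset.mul_sum]
      _ ≤ η * 1 := mul_le_mul_of_nonneg_left hw1 hη_nonneg
      _ = η := mul_one η
  -- dual attainment
  refine ⟨η, hleast, ?_, hub⟩
  by_cases hfS : f ∈ S
  · have : η = 0 := by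
      rw [hη]
      exact Metric.infDist_zero_of_mem hfS
    exact ⟨0, fun i => by simp, by simp, by simp [this]⟩
  · haveI : IsClosed (S : Set (Fin N → ℝ)) := hSclosed
    have hmkne : (Submodule.Quotient.mk f : (Fin N → ℝ) ⧸ S) ≠ 0 := by
      simpa [Submodule.Quotient.mk_eq_zero] using hfS
    obtain ⟨g, hg1, hgf⟩ := exists_dual_vector ℝ (Submodule.Quotient.mk f :
      (Fin N → ℝ) ⧸ S) (norm_ne_zero_iff.mpr hmkne)
    have hmk_norm : ∀ v : Fin N → ℝ,
        ‖(Submodule.Quotient.mk v : (Fin N → ℝ) ⧸ S)‖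
          = Metric.infDist v (S : Set (Fin N → ℝ)) := fun v =>
      QuotientAddGroup.norm_mk (S := S.toAddSubgroup) v
    set G : (Fin N → ℝ) →ₗ[ℝ] ℝ := g.toLinearMap.comp S.mkQ with hG
    set w : Fin N → ℝ := fun k => G (Pi.single k 1) with hw
    have hGsum : ∀ v : Fin N → ℝ, G v = ∑ k, v k * w k := fun v => linmap_eq_sum G v
    have hGmk : ∀ v : Fin N → ℝ, G v = g (Submodule.Quotient.mk v) := fun v => rfl
    refine ⟨w, ?_, ?_, ?_⟩
    · intro i
      have hcol : (fun k => B k i) ∈ S := by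
        refine ⟨Pi.single i 1, ?_⟩
        simp [Matrix.mulVecLin, Matrix.mulVec_single_one]
        rfl
      have : G (fun k => B k i) = 0 := by
        rw [hGmk]
        rw [(Submodule.Quotient.mk_eq_zero S).2 hcol, map_zero]
      rw [← this, hGsum]
    · -- ℓ¹ bound
      set s : Fin N → ℝ := fun k => if 0 ≤ w k then (1 : ℝ) else -1 with hsdef
      have hs_norm : ‖s‖ ≤ 1 := by
        refine (pi_norm_le_iff_of_nonneg zero_le_one).2 fun k => ?_
        by_cases h : 0 ≤ w k <;> simp [hsdef, h]
      have hGs : G s = ∑ k, |w k| := by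
        rw [hGsum]
        refine Finset.sum_congr rfl fun k _ => ?_
        by_cases h : 0 ≤ w k
        · simp [hsdef, h, abs_of_nonneg h]
        · push_neg at h
          simp [hsdef, not_le.2 h, abs_of_neg h]
      have : G s ≤ ‖g‖ * ‖(Submodule.Quotient.mk s : (Fin N → ℝ) ⧸ S)‖ := by
        rw [hGmk]
        exact le_trans (le_abs_self _) (g.le_opNorm _)
      calc ∑ k, |w k| = G s := hGs.symm
        _ ≤ ‖g‖ * ‖(Submodule.Quotient.mk s : (Fin N → ℝ) ⧸ S)‖ := this
        _ ≤ 1 * 1 := by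
            refine mul_le_mul (le_of_eq hg1) ?_ (norm_nonneg _) zero_le_one
            exact le_trans (Submodule.Quotient.norm_mk_le S s) hs_norm
        _ = 1 := one_mul 1
    · have hq : ‖(Submodule.Quotient.mk f : (Fin N → ℝ) ⧸ S)‖ = η := by
        rw [hmk_norm, hη]
      have : G f = η := by
        rw [hGmk, ← hq]
        exact_mod_cast hgf
      rw [← this, hGsum]
end

section
/- Let T be a set, v_1,…,v_n : T → ℝ functions spanning a subspace V, and h_1,…,h_N ∈ T distinct points with N ≥ 1. Suppose w ∈ ℝ^N is a nonzero vector with ∑_{k=1}^N w_k v_i(h_k) = 0 for all i = 1,…,n. Then the support H* = {h_k : w_k ≠ 0} together with the signs σ(h_k) = sgn(w_k) forms an H-set for V; that is, there is no v ∈ V such that sgn(w_k)·v(h_k) < 0 for every k with w_k ≠ 0. -/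
open scoped BigOperators

/-- If `w ∈ ℝ^N` is nonzero and `∑ k, w k * v i (h k) = 0` for
all `i`, then the support `{h k : w k ≠ 0}` with signs `σ (h k) = sgn (w k)`
is an H-set for `V = span {v_1, …, v_n}`: there is no `g ∈ V` with
`sgn (w k) * g (h k) < 0` for every `k` with `w k ≠ 0`. -/
theorem support_of_annihilating_weights_is_hset
    {T : Type*} {n N : ℕ} (hN : 1 ≤ N)
    (v : Fin n → T → ℝ) (h : Fin N → T) (hinj : Function.Injective h)
    (w : Fin N → ℝ) (hw : w ≠ 0)
    (horth : ∀ i : Fin n, ∑ k, w k * v i (h k) = 0) :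
    ¬ ∃ g ∈ Submodule.span ℝ (Set.range v),
        ∀ k : Fin N, w k ≠ 0 → Real.sign (w k) * g (h k) < 0 := by
  have key : ∀ g ∈ Submodule.span ℝ (Set.range v), ∑ k, w k * g (h k) = 0 := by
    intro g hg
    induction hg using Submodule.span_induction with
    | mem x hx =>
      obtain ⟨i, rfl⟩ := hx
      exact horth i
    | zero => simp
    | add x y hx hy ihx ihy =>
      simp only [Pi.add_apply, mul_add, Finset.sum_add_distrib, ihx, ihy, add_zero]
    | smul c x hx ih =>
      simp only [Pi.smul_apply, smul_eq_mul]
      calc ∑ k, w k * (c * x (h k)) = c * ∑ k, w k * x (h k) := by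
            rw [Finset.mul_sum]; congr 1; ext k; ring
        _ = 0 := by rw [ih, mul_zero]
  rintro ⟨g, hg, hneg⟩
  have hterm : ∀ k : Fin N, w k ≠ 0 → w k * g (h k) < 0 := by
    intro k hwk
    have hlt := hneg k hwk
    rcases lt_trichotomy (w k) 0 with hneg' | heq | hpos
    · rw [Real.sign_of_neg hneg'] at hlt
      have : 0 < g (h k) := by linarith
      exact mul_neg_of_neg_of_pos hneg' this
    · exact absurd heq hwk
    · rw [Real.sign_of_pos hpos, one_mul] at hlt
      exact mul_neg_of_pos_of_neg hpos hlt
  obtain ⟨k0, hk0⟩ : ∃ k, w k ≠ 0 := Function.ne_iff.mp hw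
  have hsum : ∑ k, w k * g (h k) < 0 := by
    apply Finset.sum_neg' (fun k _ => ?_) ⟨k0, Finset.mem_univ k0, hterm k0 hk0⟩
    by_cases hwk : w k = 0
    · simp [hwk]
    · exact (hterm k hwk).le
  linarith [key g hg]
end

section
/- Let T be a set and K : T × T → ℝ a symmetric kernel. Let x_1,…,x_n ∈ T be distinct points forming the set X, let V_X be the span of the translates K(·,x_1),…,K(·,x_n), let h_1,…,h_N ∈ T be distinct points forming the set H (N ≥ 1), and let σ_1,…,σ_N ∈ {−1,+1}. Then (H,σ) is an H-set for V_X if and only if there exists a vector w ∈ ℝ^N with w_k ≥ 0 for all k, w ≠ 0, such that the function f(x) = ∑_{k=1}^N w_k σ_k K(x,h_k) vanishes at every point of X, i.e. ∑_{k=1}^N w_k K(x_j,h_k) σ_k = 0 for all j = 1,…,n. -/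
open scoped BigOperators

/-- (Characterization of H-sets in kernel-based spaces.)
For a symmetric kernel `K`, `V_X = span {K(·, x_1), …, K(·, x_n)}`, distinct
points `h_1, …, h_N` with signs `σ_k ∈ {−1, +1}`: `(H, σ)` is an H-set for
`V_X` if and only if there is a nonzero nonnegative `w ∈ ℝ^N` such that the
function `f = ∑ k, w k * σ k * K(·, h k)` vanishes on `X`, i.e.
`∑ k, w k * K (x j) (h k) * σ k = 0` for all `j`. -/
theorem kernel_hset_characterization
    {T : Type*} {n N : ℕ} (hN : 1 ≤ N)
    (K : T → T → ℝ) (hsym : ∀ s t, K s t = K t s)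
    (x : Fin n → T) (hx : Function.Injective x)
    (h : Fin N → T) (hh : Function.Injective h)
    (σ : Fin N → ℝ) (hσ : ∀ k, σ k = 1 ∨ σ k = -1) :
    (¬ ∃ g ∈ Submodule.span ℝ (Set.range fun j : Fin n => fun y : T => K y (x j)),
        ∀ k : Fin N, σ k * g (h k) < 0) ↔
      ∃ w : Fin N → ℝ, (∀ k, 0 ≤ w k) ∧ w ≠ 0 ∧
        ∀ j : Fin n, ∑ k, w k * K (x j) (h k) * σ k = 0 := by
  classical
  set A : Fin N → (Fin n → ℝ) := fun k j => K (x j) (h k) * σ k with hA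
  constructor
  · intro hng
    by_contra hw
    -- first: 0 is not in the convex hull of the A k
    have h0 : (0 : Fin n → ℝ) ∉ convexHull ℝ (Set.range A) := by
      intro h0mem
      rw [convexHull_range_eq_exists_affineCombination] at h0mem
      obtain ⟨s, w, hw0, hw1, hcomb⟩ := h0mem
      rw [Finset.affineCombination_eq_linear_combination _ _ _ hw1] at hcomb
      refine hw ⟨fun k => if k ∈ s then w k else 0, ?_, ?_, ?_⟩
      · intro k
        by_cases hk : k ∈ s
        · simpa [hk] using hw0 k hk
        · simp [hk]
      · intro hz
        have hsum : ∑ k, (if k ∈ s then w k else 0) = 1 := by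
          rw [← Finset.sum_subset (Finset.subset_univ s)
            (by intro k _ hk; simp [hk])]
          simpa using hw1
        rw [funext_iff] at hz
        simp only [Pi.zero_apply] at hz
        simp [hz] at hsum
      · intro j
        have := congrFun hcomb j
        simp only [Finset.sum_apply, Pi.smul_apply, smul_eq_mul, Pi.zero_apply] at this
        rw [← Finset.sum_subset (Finset.subset_univ s)
          (by intro k _ hk; simp [hk])]
        calc ∑ k ∈ s, (if k ∈ s then w k else 0) * K (x j) (h k) * σ k
            = ∑ k ∈ s, w k * (A k j) := by
              refine Finset.sum_congr rfl fun k hk => ?_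
              simp [hA, hk, mul_assoc]
          _ = 0 := this
    -- separate 0 from the convex hull
    obtain ⟨f, u, hfa, hu⟩ :=
      geometric_hahn_banach_closed_point (convex_convexHull ℝ _)
        ((Set.finite_range A).isClosed_convexHull ℝ) h0
    have hu0 : u < 0 := by simpa using hu
    set c : Fin n → ℝ := fun j => f (Pi.single j 1) with hc
    have hfv : ∀ v : Fin n → ℝ, f v = ∑ j, v j * c j := by
      intro v
      conv_lhs => rw [pi_eq_sum_univ v]
      rw [map_sum]
      refine Finset.sum_congr rfl fun j _ => ?_
      rw [map_smul]
      have hsingle : (fun j' => if j = j' then (1 : ℝ) else 0) = Pi.single j 1 := by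
        funext j'; simp [Pi.single_apply, eq_comm]
      simp [hc, hsingle]
    refine hng ⟨fun y => ∑ j, c j * K y (x j), ?_, ?_⟩
    · rw [Submodule.mem_span_range_iff_exists_fun]
      exact ⟨c, by funext y; simp [Finset.sum_apply]⟩
    · intro k
      have hAk : f (A k) < 0 :=
        lt_trans (hfa (A k) (subset_convexHull ℝ _ (Set.mem_range_self k))) hu0
      have : σ k * ∑ j, c j * K (h k) (x j) = f (A k) := by
        rw [hfv, Finset.mul_sum]
        refine Finset.sum_congr rfl fun j _ => ?_
        simp [hA, hsym (h k) (x j)]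
        ring
      simpa [this] using hAk
  · rintro ⟨w, hw0, hwne, hwsum⟩ ⟨g, hg, hglt⟩
    rw [Submodule.mem_span_range_iff_exists_fun] at hg
    obtain ⟨c, hc⟩ := hg
    have hgval : ∀ t, g t = ∑ j, c j * K t (x j) := by
      intro t
      rw [← hc]
      simp [Finset.sum_apply]
    have key : ∑ k, w k * (σ k * g (h k)) = 0 := by
      have : ∑ k, w k * (σ k * g (h k))
          = ∑ j, c j * (∑ k, w k * K (x j) (h k) * σ k) := by
        simp only [hgval, Finset.mul_sum]
        rw [Finset.sum_comm]
        refine Finset.sum_congr rfl fun j _ => ?_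
        refine Finset.sum_congr rfl fun k _ => ?_
        rw [hsym (h k) (x j)]
        ring
      rw [this]
      simp [hwsum]
    have hne : ∃ k0, w k0 ≠ 0 := by
      by_contra hall
      push_neg at hall
      exact hwne (funext fun k => hall k)
    obtain ⟨k0, hk0⟩ := hne
    have hlt : ∑ k, w k * (σ k * g (h k)) < ∑ _k : Fin N, (0 : ℝ) := by
      refine Finset.sum_lt_sum (fun k _ => ?_) ⟨k0, Finset.mem_univ _, ?_⟩
      · exact mul_nonpos_of_nonneg_of_nonpos (hw0 k) (le_of_lt (hglt k))
      · exact mul_neg_of_pos_of_neg (lt_of_le_of_ne (hw0 k0) (Ne.symm hk0)) (hglt k0)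
    rw [key] at hlt
    simp at hlt
end

section
/- Let T be a set, K : T × T → ℝ a symmetric kernel, x_1,…,x_n ∈ T distinct points forming X with invertible kernel matrix M = (K(x_i,x_j)), ξ ∈ T with ξ ∉ X, and f : T → ℝ. Then the minimum over c ∈ ℝⁿ of the discrete Chebyshev error max_{t ∈ X∪{ξ}} |f(t) − ∑_{j=1}^n c_j K(t,x_j)| exists and equals |f(ξ) − s_{X,f}(ξ)| / (1 + L_X(ξ)). -/
open scoped BigOperators
open Matrix

/-- The kernel matrix with entries `K (x i) (x j)`. -/
noncomputable def kernelMatrix {T : Type*} {n : ℕ} (K : T → T → ℝ) (x : Fin n → T) :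
    Matrix (Fin n) (Fin n) ℝ :=
  Matrix.of fun i j => K (x i) (x j)

/-- The Lagrange basis function `u_i(y) = ∑ j, α_{ij} K (y, x j)`, where
`α` is the inverse of the kernel matrix. -/
noncomputable def lagrangeBasis {T : Type*} {n : ℕ} (K : T → T → ℝ) (x : Fin n → T)
    (i : Fin n) (y : T) : ℝ :=
  ∑ j, (kernelMatrix K x)⁻¹ i j * K y (x j)

/-- The squared power function `P_X²(ξ) = K(ξ,ξ) − ∑ i, u_i(ξ) K(x_i, ξ)`. -/
noncomputable def powerFunSq {T : Type*} {n : ℕ} (K : T → T → ℝ) (x : Fin n → T)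
    (ξ : T) : ℝ :=
  K ξ ξ - ∑ i, lagrangeBasis K x i ξ * K (x i) ξ

section aux
variable {T : Type*} {n : ℕ}

lemma kernel_inv_symm (K : T → T → ℝ) (hsym : ∀ s t, K s t = K t s)
    (x : Fin n → T) (i j : Fin n) :
    (kernelMatrix K x)⁻¹ i j = (kernelMatrix K x)⁻¹ j i := by
  have h : (kernelMatrix K x)ᵀ = kernelMatrix K x := by
    ext a b
    simp [kernelMatrix, Matrix.transpose_apply, hsym (x b) (x a)]
  have h2 := Matrix.transpose_nonsing_inv (kernelMatrix K x)
  rw [h] at h2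
  conv_lhs => rw [← h2]
  simp [Matrix.transpose_apply]

lemma mySignMulSelf (x : ℝ) : Real.sign x * x = |x| := by
  rcases lt_trichotomy x 0 with h|h|h
  · rw [Real.sign_of_neg h, abs_of_neg h]; ring
  · simp [h]
  · rw [Real.sign_of_pos h, abs_of_pos h]; ring

lemma mySignMulAbs (x : ℝ) : Real.sign x * |x| = x := by
  rcases lt_trichotomy x 0 with h|h|h
  · rw [Real.sign_of_neg h, abs_of_neg h]; ring
  · simp [h]
  · rw [Real.sign_of_pos h, abs_of_pos h]; ring

lemma abs_sign_le_one (x : ℝ) : |Real.sign x| ≤ 1 := by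
  rcases lt_trichotomy x 0 with h|h|h
  · rw [Real.sign_of_neg h]; norm_num
  · simp [h]
  · rw [Real.sign_of_pos h]; norm_num

lemma repro (K : T → T → ℝ) (hsym : ∀ s t, K s t = K t s) (x : Fin n → T)
    (hM : IsUnit (kernelMatrix K x)) (ξ : T) (c : Fin n → ℝ) :
    ∑ i, lagrangeBasis K x i ξ * (∑ j, c j * K (x i) (x j))
      = ∑ j, c j * K ξ (x j) := by
  have hdet : IsUnit (kernelMatrix K x).det :=
    (Matrix.isUnit_iff_isUnit_det _).mp hM
  have hinv : (kernelMatrix K x)⁻¹ * kernelMatrix K x = 1 :=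
    Matrix.nonsing_inv_mul _ hdet
  have key : ∀ k j : Fin n, (∑ i, (kernelMatrix K x)⁻¹ i k * K (x i) (x j))
      = if k = j then 1 else 0 := by
    intro k j
    have h1 : ((kernelMatrix K x)⁻¹ * kernelMatrix K x) k j
        = if k = j then 1 else 0 := by rw [hinv]; simp [Matrix.one_apply]
    rw [← h1, Matrix.mul_apply]
    apply Finset.sum_congr rfl
    intro i _
    rw [kernel_inv_symm K hsym x i k]
    rfl
  calc ∑ i, lagrangeBasis K x i ξ * (∑ j, c j * K (x i) (x j))
      = ∑ i, ∑ k, ∑ j, ((kernelMatrix K x)⁻¹ i k * K ξ (x k)) * (c j * K (x i) (x j)) := by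
        apply Finset.sum_congr rfl; intro i _
        rw [lagrangeBasis, Finset.sum_mul_sum]
    _ = ∑ k, ∑ j, ∑ i, ((kernelMatrix K x)⁻¹ i k * K ξ (x k)) * (c j * K (x i) (x j)) := by
        rw [Finset.sum_comm]
        apply Finset.sum_congr rfl; intro k _
        rw [Finset.sum_comm]
    _ = ∑ k, ∑ j, (K ξ (x k) * c j) * ∑ i, (kernelMatrix K x)⁻¹ i k * K (x i) (x j) := by
        apply Finset.sum_congr rfl; intro k _
        apply Finset.sum_congr rfl; intro j _
        rw [Finset.mul_sum]
        apply Finset.sum_congr rfl; intro i _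
        ring
    _ = ∑ k, ∑ j, (K ξ (x k) * c j) * (if k = j then 1 else 0) := by
        apply Finset.sum_congr rfl; intro k _
        apply Finset.sum_congr rfl; intro j _
        rw [key]
    _ = ∑ j, c j * K ξ (x j) := by
        apply Finset.sum_congr rfl; intro k _
        simp [mul_ite, mul_one, mul_zero, Finset.sum_ite_eq, mul_comm]

lemma interp (K : T → T → ℝ) (x : Fin n → T) (hM : IsUnit (kernelMatrix K x))
    (v : Fin n → ℝ) (i : Fin n) :
    ∑ j, (∑ k, (kernelMatrix K x)⁻¹ j k * v k) * K (x i) (x j) = v i := by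
  have hdet : IsUnit (kernelMatrix K x).det :=
    (Matrix.isUnit_iff_isUnit_det _).mp hM
  have hinv : kernelMatrix K x * (kernelMatrix K x)⁻¹ = 1 :=
    Matrix.mul_nonsing_inv _ hdet
  have key : ∀ k : Fin n, (∑ j, K (x i) (x j) * (kernelMatrix K x)⁻¹ j k)
      = if i = k then 1 else 0 := by
    intro k
    have h1 : (kernelMatrix K x * (kernelMatrix K x)⁻¹) i k
        = if i = k then 1 else 0 := by rw [hinv]; simp [Matrix.one_apply]
    rw [← h1, Matrix.mul_apply]
    rfl
  calc ∑ j, (∑ k, (kernelMatrix K x)⁻¹ j k * v k) * K (x i) (x j)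
      = ∑ j, ∑ k, (K (x i) (x j) * (kernelMatrix K x)⁻¹ j k) * v k := by
        apply Finset.sum_congr rfl; intro j _
        rw [Finset.sum_mul]
        apply Finset.sum_congr rfl; intro k _
        ring
    _ = ∑ k, (∑ j, K (x i) (x j) * (kernelMatrix K x)⁻¹ j k) * v k := by
        rw [Finset.sum_comm]
        apply Finset.sum_congr rfl; intro k _
        rw [Finset.sum_mul]
    _ = ∑ k, (if i = k then 1 else 0) * v k := by
        apply Finset.sum_congr rfl; intro k _
        rw [key]
    _ = v i := by simp

end aux

/-- (Kernel-based divided difference.) For a symmetric kernel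
with invertible kernel matrix, `ξ ∉ X`, and `f : T → ℝ`, the minimum over
`c ∈ ℝⁿ` of the discrete Chebyshev error
`max_{t ∈ X ∪ {ξ}} |f(t) − ∑ j, c j K(t, x_j)|` exists and equals
`|f(ξ) − s_{X,f}(ξ)| / (1 + L_X(ξ))`, where `s_{X,f}(ξ) = ∑ i, f(x_i) u_i(ξ)`
and `L_X(ξ) = ∑ i, |u_i(ξ)|`. -/
theorem discrete_chebyshev_error_on_extra_point
    {T : Type*} {n : ℕ} (K : T → T → ℝ) (hsym : ∀ s t, K s t = K t s)
    (x : Fin n → T) (hx : Function.Injective x)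
    (hM : IsUnit (kernelMatrix K x)) (ξ : T) (hξ : ∀ i, x i ≠ ξ) (f : T → ℝ) :
    IsLeast {r : ℝ | ∃ c : Fin n → ℝ,
        r = Finset.univ.sup' Finset.univ_nonempty
          (fun k : Fin (n + 1) =>
            |f ((Fin.snoc x ξ : Fin (n + 1) → T) k) -
              ∑ j, c j * K ((Fin.snoc x ξ : Fin (n + 1) → T) k) (x j)|)}
      (|f ξ - ∑ i, f (x i) * lagrangeBasis K x i ξ| /
        (1 + ∑ i, |lagrangeBasis K x i ξ|)) := by
  classical
  set u : Fin n → ℝ := fun i => lagrangeBasis K x i ξ with hu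
  set E : ℝ := f ξ - ∑ i, f (x i) * u i with hE
  set L : ℝ := ∑ i, |u i| with hLdef
  have hL0 : 0 ≤ L := Finset.sum_nonneg fun i _ => abs_nonneg _
  have h1L : (0:ℝ) < 1 + L := by linarith
  set m : ℝ := |E| / (1 + L) with hm
  have hm0 : 0 ≤ m := div_nonneg (abs_nonneg _) h1L.le
  have habsE : |E| = m * (1 + L) := by
    rw [hm]; field_simp
  constructor
  · -- membership
    set σ : ℝ := Real.sign E with hσ
    set v : Fin n → ℝ := fun i => f (x i) + σ * Real.sign (u i) * m with hv
    set c : Fin n → ℝ := fun j => ∑ k, (kernelMatrix K x)⁻¹ j k * v k with hc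
    refine ⟨c, ?_⟩
    have hgx : ∀ i : Fin n, ∑ j, c j * K (x i) (x j) = v i := by
      intro i
      simpa [hc] using interp K x hM v i
    have hgξ : ∑ j, c j * K ξ (x j) = ∑ i, u i * v i := by
      rw [← repro K hsym x hM ξ c]
      exact Finset.sum_congr rfl fun i _ => by rw [hgx i]
    have hsign : ∀ i, Real.sign (u i) * u i = |u i| := fun i => mySignMulSelf (u i)
    have hsum : ∑ i, u i * v i = (∑ i, f (x i) * u i) + σ * m * L := by
      have : ∀ i, u i * v i = f (x i) * u i + σ * m * (Real.sign (u i) * u i) := by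
        intro i; simp only [hv]; ring
      rw [Finset.sum_congr rfl fun i _ => this i, Finset.sum_add_distrib]
      congr 1
      rw [hLdef, Finset.mul_sum]
      exact Finset.sum_congr rfl fun i _ => by rw [hsign i]
    have hEval : E = σ * m * (1 + L) := by
      conv_lhs => rw [← mySignMulAbs E]
      rw [habsE, hσ]; ring
    have hEξ : f ξ - ∑ i, u i * v i = σ * m := by
      have h2 : f ξ - ∑ i, f (x i) * u i = σ * m * (1 + L) := by
        rw [← hEval, hE]
      rw [hsum]; linarith [h2]
    have habsσm : |σ * m| = m := by
      rcases eq_or_ne E 0 with h | h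
      · have hm' : m = 0 := by rw [hm, h]; simp
        simp [hm']
      · have : |σ| = 1 := by
          rcases lt_or_gt_of_ne h with h' | h'
          · rw [hσ, Real.sign_of_neg h']; norm_num
          · rw [hσ, Real.sign_of_pos h']; norm_num
        rw [abs_mul, this, one_mul, abs_of_nonneg hm0]
    set F : Fin (n+1) → ℝ := fun k =>
      |f ((Fin.snoc x ξ : Fin (n + 1) → T) k) -
        ∑ j, c j * K ((Fin.snoc x ξ : Fin (n + 1) → T) k) (x j)| with hF
    have hFlast : F (Fin.last n) = m := by
      simp only [hF, Fin.snoc_last]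
      rw [hgξ, hEξ, habsσm]
    have hFcast : ∀ i : Fin n, F (Fin.castSucc i) ≤ m := by
      intro i
      simp only [hF, Fin.snoc_castSucc]
      rw [hgx i]
      have h3 : f (x i) - v i = -(σ * Real.sign (u i) * m) := by
        simp only [hv]; ring
      rw [h3, abs_neg, abs_mul, abs_mul, abs_of_nonneg hm0]
      calc |σ| * |Real.sign (u i)| * m ≤ 1 * 1 * m := by
            apply mul_le_mul_of_nonneg_right _ hm0
            exact mul_le_mul (abs_sign_le_one E) (abs_sign_le_one (u i))
              (abs_nonneg _) zero_le_one
        _ = m := by ring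
    apply le_antisymm
    · rw [← hFlast]
      exact Finset.le_sup' F (Finset.mem_univ _)
    · apply Finset.sup'_le
      intro k _
      refine Fin.lastCases ?_ ?_ k
      · rw [hFlast]
      · exact hFcast
  · -- lower bound
    rintro r ⟨c, rfl⟩
    set F : Fin (n+1) → ℝ := fun k =>
      |f ((Fin.snoc x ξ : Fin (n + 1) → T) k) -
        ∑ j, c j * K ((Fin.snoc x ξ : Fin (n + 1) → T) k) (x j)| with hF
    set S : ℝ := Finset.univ.sup' Finset.univ_nonempty F with hS
    have hrepro := repro K hsym x hM ξ c
    have hEeq : E = (f ξ - ∑ j, c j * K ξ (x j))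
        - ∑ i, u i * (f (x i) - ∑ j, c j * K (x i) (x j)) := by
      have h1 : ∑ i, u i * (f (x i) - ∑ j, c j * K (x i) (x j))
          = (∑ i, u i * f (x i)) - ∑ j, c j * K ξ (x j) := by
        rw [← hrepro, ← Finset.sum_sub_distrib]
        exact Finset.sum_congr rfl fun i _ => by ring
      rw [h1, hE]
      have h2 : ∑ i, f (x i) * u i = ∑ i, u i * f (x i) :=
        Finset.sum_congr rfl fun i _ => mul_comm _ _
      rw [h2]; ring
    have hSξ : |f ξ - ∑ j, c j * K ξ (x j)| ≤ S := by
      have h4 := Finset.le_sup' F (Finset.mem_univ (Fin.last n))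
      rw [← hS] at h4
      simpa [hF, Fin.snoc_last] using h4
    have hSx : ∀ i : Fin n, |f (x i) - ∑ j, c j * K (x i) (x j)| ≤ S := by
      intro i
      have h4 := Finset.le_sup' F (Finset.mem_univ (Fin.castSucc i))
      rw [← hS] at h4
      simpa [hF, Fin.snoc_castSucc] using h4
    have hmain : |E| ≤ (1 + L) * S := by
      calc |E| ≤ |f ξ - ∑ j, c j * K ξ (x j)|
            + |∑ i, u i * (f (x i) - ∑ j, c j * K (x i) (x j))| := by
            rw [hEeq]; exact abs_sub _ _
        _ ≤ S + ∑ i, |u i| * S := by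
            apply add_le_add hSξ
            calc |∑ i, u i * (f (x i) - ∑ j, c j * K (x i) (x j))|
                ≤ ∑ i, |u i * (f (x i) - ∑ j, c j * K (x i) (x j))| :=
                  Finset.abs_sum_le_sum_abs _ _
              _ ≤ ∑ i, |u i| * S := by
                  apply Finset.sum_le_sum
                  intro i _
                  rw [abs_mul]
                  exact mul_le_mul_of_nonneg_left (hSx i) (abs_nonneg _)
        _ = (1 + L) * S := by rw [← Finset.sum_mul, ← hLdef]; ring
    rw [hm, div_le_iff₀ h1L]
    linarith [hmain]
end

section
/- Let T be a set, K : T × T → ℝ a symmetric kernel, x_1,…,x_n ∈ T distinct points forming X with invertible kernel matrix M = (K(x_i,x_j)), and ξ ∈ T with ξ ∉ X. Let V_X be the span of K(·,x_1),…,K(·,x_n). Then the set {ξ} ∪ {x_i : u_i(ξ) ≠ 0} with the signs σ(ξ) = +1 and σ(x_i) = −sgn(u_i(ξ)) is an H-set for V_X; that is, there is no v ∈ V_X with v(ξ) < 0 and sgn(u_i(ξ))·v(x_i) > 0 for every i with u_i(ξ) ≠ 0. -/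
open scoped BigOperators
open Matrix

/-- For a symmetric kernel with invertible kernel matrix and
`ξ ∉ X`, the set `{ξ} ∪ {x_i : u_i(ξ) ≠ 0}` with signs `σ(ξ) = +1`,
`σ(x_i) = −sgn(u_i(ξ))` is an H-set for `V_X = span {K(·,x_1), …, K(·,x_n)}`:
there is no `v ∈ V_X` with `v(ξ) < 0` and `sgn(u_i(ξ)) * v(x_i) > 0` for every
`i` with `u_i(ξ) ≠ 0`. -/
theorem lagrangian_support_is_hset
    {T : Type*} {n : ℕ} (K : T → T → ℝ) (hsym : ∀ s t, K s t = K t s)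
    (x : Fin n → T) (hx : Function.Injective x)
    (hM : IsUnit (kernelMatrix K x)) (ξ : T) (hξ : ∀ i, x i ≠ ξ) :
    ¬ ∃ v ∈ Submodule.span ℝ (Set.range fun j : Fin n => fun y : T => K y (x j)),
        v ξ < 0 ∧ ∀ i : Fin n, lagrangeBasis K x i ξ ≠ 0 →
          0 < Real.sign (lagrangeBasis K x i ξ) * v (x i) := by
  rintro ⟨v, hv, hneg, hpos⟩
  obtain ⟨c, hc⟩ := (Submodule.mem_span_range_iff_exists_fun ℝ).mp hv
  set M := kernelMatrix K x with hMdef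
  have hdet : IsUnit M.det := (Matrix.isUnit_iff_isUnit_det _).mp hM
  have hMT : Mᵀ = M := by
    ext i j; simp [hMdef, kernelMatrix, Matrix.transpose_apply, hsym]
  have hAT : (M⁻¹)ᵀ = M⁻¹ := by
    rw [Matrix.transpose_nonsing_inv, hMT]
  set b : Fin n → ℝ := fun j => K ξ (x j) with hb
  have h1 : (fun i => lagrangeBasis K x i ξ) = M⁻¹ *ᵥ b := by
    ext i
    simp [lagrangeBasis, Matrix.mulVec, dotProduct, hb, hMdef]
  have h2 : (fun i => v (x i)) = M *ᵥ c := by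
    ext i
    rw [← hc]
    simp [Matrix.mulVec, dotProduct, hMdef, kernelMatrix, Finset.sum_apply,
      mul_comm]
  have hvξ : v ξ = c ⬝ᵥ b := by
    rw [← hc]
    simp [dotProduct, Finset.sum_apply, hb]
  have key : ∑ i, lagrangeBasis K x i ξ * v (x i) = v ξ := by
    have : ∑ i, lagrangeBasis K x i ξ * v (x i)
        = (M *ᵥ c) ⬝ᵥ (M⁻¹ *ᵥ b) := by
      rw [← h1, ← h2, dotProduct_comm]
      rfl
    rw [this, Matrix.dotProduct_mulVec, ← Matrix.mulVec_transpose, hAT,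
      Matrix.mulVec_mulVec, Matrix.nonsing_inv_mul _ hdet, Matrix.one_mulVec, hvξ]
  have hsum : 0 ≤ ∑ i, lagrangeBasis K x i ξ * v (x i) := by
    apply Finset.sum_nonneg
    intro i _
    by_cases hu : lagrangeBasis K x i ξ = 0
    · simp [hu]
    · calc (0:ℝ) ≤ |lagrangeBasis K x i ξ| * (Real.sign (lagrangeBasis K x i ξ) * v (x i)) :=
            mul_nonneg (abs_nonneg _) (hpos i hu).le
        _ = (Real.sign (lagrangeBasis K x i ξ) * |lagrangeBasis K x i ξ|) * v (x i) := by ring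
        _ = lagrangeBasis K x i ξ * v (x i) := by
            rcases lt_trichotomy (lagrangeBasis K x i ξ) 0 with h | h | h
            · rw [Real.sign_of_neg h, abs_of_neg h]; ring
            · exact absurd h hu
            · rw [Real.sign_of_pos h, abs_of_pos h]; ring
  linarith [key ▸ hsum]
end

section
/- Let T be a set, K : T × T → ℝ a symmetric kernel, x_1,…,x_n ∈ T distinct points forming X with invertible kernel matrix M = (K(x_i,x_j)), ξ ∈ T with ξ ∉ X, and f : T → ℝ. Assume u_i(ξ) ≠ 0 for every i = 1,…,n. Let η* = min_{c∈ℝⁿ} max_{t ∈ X∪{ξ}} |f(t) − ∑_{j=1}^n c_j K(t,x_j)|, and let c* ∈ ℝⁿ attain this minimum. Then the error of the best approximation equioscillates on all n+1 points: |f(t) − ∑_{j=1}^n c*_j K(t,x_j)| = η* for every t ∈ X∪{ξ}. -/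
open scoped BigOperators

/-- (Full equioscillation in the nondegenerate case.)
For a symmetric kernel with invertible kernel matrix, `ξ ∉ X`, data `f`, and
`u_i(ξ) ≠ 0` for all `i`: if `η*` is the minimum over `c ∈ ℝⁿ` of the discrete
Chebyshev error `max_{t ∈ X ∪ {ξ}} |f(t) − ∑ j, c j K(t, x_j)|` and `c*`
attains this minimum, then the error of the best approximation equioscillates:
`|f(t) − ∑ j, c*_j K(t, x_j)| = η*` at every `t ∈ X ∪ {ξ}`. -/
theorem equioscillation_of_nondegenerate
    {T : Type*} {n : ℕ} (K : T → T → ℝ) (hsym : ∀ s t, K s t = K t s)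
    (x : Fin n → T) (hx : Function.Injective x)
    (hM : IsUnit (kernelMatrix K x)) (ξ : T) (hξ : ∀ i, x i ≠ ξ) (f : T → ℝ)
    (hu : ∀ i : Fin n, lagrangeBasis K x i ξ ≠ 0)
    (ηstar : ℝ) (cstar : Fin n → ℝ)
    (hmin : IsLeast {r : ℝ | ∃ c : Fin n → ℝ,
        r = Finset.univ.sup' Finset.univ_nonempty
          (fun k : Fin (n + 1) =>
            |f ((Fin.snoc x ξ : Fin (n + 1) → T) k) -
              ∑ j, c j * K ((Fin.snoc x ξ : Fin (n + 1) → T) k) (x j)|)} ηstar)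
    (hattain : Finset.univ.sup' Finset.univ_nonempty
        (fun k : Fin (n + 1) =>
          |f ((Fin.snoc x ξ : Fin (n + 1) → T) k) -
            ∑ j, cstar j * K ((Fin.snoc x ξ : Fin (n + 1) → T) k) (x j)|) = ηstar) :
    ∀ k : Fin (n + 1),
      |f ((Fin.snoc x ξ : Fin (n + 1) → T) k) -
        ∑ j, cstar j * K ((Fin.snoc x ξ : Fin (n + 1) → T) k) (x j)| = ηstar := by

  classical
  have hdet : IsUnit (kernelMatrix K x).det := (Matrix.isUnit_iff_isUnit_det _).mp hM
  set M := kernelMatrix K x with hMdef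
  set α := M⁻¹ with hαdef
  have hMα : M * α = 1 := Matrix.mul_nonsing_inv M hdet
  set t : Fin (n + 1) → T := (Fin.snoc x ξ : Fin (n + 1) → T) with htdef
  set e : Fin (n + 1) → ℝ :=
    fun k => f (t k) - ∑ j, cstar j * K (t k) (x j) with hedef
  have hle : ∀ k, |e k| ≤ ηstar := by
    intro k
    rw [← hattain]
    exact Finset.le_sup'
      (fun k : Fin (n+1) => |f (t k) - ∑ j, cstar j * K (t k) (x j)|) (Finset.mem_univ k)
  by_contra hcon
  push_neg at hcon
  obtain ⟨k₁, hk₁⟩ := hcon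
  have hlt : |e k₁| < ηstar := lt_of_le_of_ne (hle k₁) hk₁
  have hMsymm : ∀ i j, M i j = M j i := by
    intro i j
    simp only [hMdef, kernelMatrix, Matrix.of_apply]
    exact hsym (x i) (x j)
  -- basic evaluation of sums via mulVec
  have hMd : ∀ (v : Fin n → ℝ) (i : Fin n),
      ∑ j, (α.mulVec v) j * K (x i) (x j) = v i := by
    intro v i
    have h1 : ∑ j, (α.mulVec v) j * K (x i) (x j) = (M.mulVec (α.mulVec v)) i := by
      simp only [Matrix.mulVec, dotProduct, hMdef, kernelMatrix, Matrix.of_apply]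
      exact Finset.sum_congr rfl fun j _ => mul_comm _ _
    rw [h1, Matrix.mulVec_mulVec, hMα, Matrix.one_mulVec]
  -- key identity: K ξ (x j) = ∑ i, u_i(ξ) * M i j
  have key : ∀ j, K ξ (x j) = ∑ i, lagrangeBasis K x i ξ * M i j := by
    intro j
    have h1 : ∀ l, ∑ i, M j i * α i l = (1 : Matrix (Fin n) (Fin n) ℝ) j l := by
      intro l
      rw [← hMα, Matrix.mul_apply]
    calc K ξ (x j) = ∑ l, (1 : Matrix (Fin n) (Fin n) ℝ) j l * K ξ (x l) := by
          simp [Matrix.one_apply]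
      _ = ∑ l, (∑ i, M j i * α i l) * K ξ (x l) := by
          exact Finset.sum_congr rfl fun l _ => by rw [h1]
      _ = ∑ l, ∑ i, M j i * α i l * K ξ (x l) := by
          exact Finset.sum_congr rfl fun l _ => by rw [Finset.sum_mul]
      _ = ∑ i, ∑ l, M j i * α i l * K ξ (x l) := Finset.sum_comm
      _ = ∑ i, lagrangeBasis K x i ξ * M i j := by
          refine Finset.sum_congr rfl fun i _ => ?_
          simp only [lagrangeBasis, ← hMdef, ← hαdef, Finset.sum_mul]
          refine Finset.sum_congr rfl fun l _ => ?_
          rw [hMsymm j i]; ring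
  -- find perturbation direction d
  obtain ⟨d, hd⟩ : ∃ d : Fin n → ℝ, ∀ k, k ≠ k₁ → ∑ j, d j * K (t k) (x j) = e k := by
    rcases eq_or_ne k₁ (Fin.last n) with hlast | hne
    · refine ⟨α.mulVec (fun i => e i.castSucc), fun k hk => ?_⟩
      obtain ⟨i, rfl⟩ := Fin.exists_castSucc_eq.mpr (hlast ▸ hk)
      have ht1 : t i.castSucc = x i := by simp [htdef]
      rw [ht1, hMd]
    · obtain ⟨i₀, rfl⟩ := Fin.exists_castSucc_eq.mpr hne
      set u : Fin n → ℝ := fun i => lagrangeBasis K x i ξ with hudef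
      set w : Fin n → ℝ := fun i =>
        if i = i₀ then
          (e (Fin.last n) - ∑ i ∈ Finset.univ.erase i₀, u i * e i.castSucc) / u i₀
        else e i.castSucc with hwdef
      refine ⟨α.mulVec w, fun k hk => ?_⟩
      rcases eq_or_ne k (Fin.last n) with rfl | hk'
      · have ht1 : t (Fin.last n) = ξ := by simp [htdef]
        rw [ht1]
        calc ∑ j, (α.mulVec w) j * K ξ (x j)
            = ∑ j, (α.mulVec w) j * ∑ i, u i * M i j := by
              exact Finset.sum_congr rfl fun j _ => by rw [key j]
          _ = ∑ j, ∑ i, u i * (M i j * (α.mulVec w) j) := by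
              refine Finset.sum_congr rfl fun j _ => ?_
              rw [Finset.mul_sum]
              exact Finset.sum_congr rfl fun i _ => by ring
          _ = ∑ i, ∑ j, u i * (M i j * (α.mulVec w) j) := Finset.sum_comm
          _ = ∑ i, u i * w i := by
              refine Finset.sum_congr rfl fun i _ => ?_
              rw [← Finset.mul_sum]
              congr 1
              have := hMd w i
              have h2 : ∑ j, M i j * (α.mulVec w) j = ∑ j, (α.mulVec w) j * K (x i) (x j) := by
                refine Finset.sum_congr rfl fun j _ => ?_
                simp only [hMdef, kernelMatrix, Matrix.of_apply]
                ring
              rw [h2, this]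
          _ = e (Fin.last n) := by
              rw [← Finset.add_sum_erase _ _ (Finset.mem_univ i₀)]
              have hwi₀ : w i₀ = (e (Fin.last n) -
                  ∑ i ∈ Finset.univ.erase i₀, u i * e i.castSucc) / u i₀ := by
                rw [hwdef]; simp
              have hrest : ∑ i ∈ Finset.univ.erase i₀, u i * w i
                  = ∑ i ∈ Finset.univ.erase i₀, u i * e i.castSucc := by
                refine Finset.sum_congr rfl fun i hi => ?_
                have : i ≠ i₀ := (Finset.mem_erase.mp hi).1
                rw [hwdef]; simp [this]
              rw [hwi₀, hrest, mul_div_cancel₀ _ (hu i₀)]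
              ring
      · obtain ⟨i, rfl⟩ := Fin.exists_castSucc_eq.mpr hk'
        have hii : i ≠ i₀ := fun h => hk (by rw [h])
        have ht1 : t i.castSucc = x i := by simp [htdef]
        rw [ht1, hMd, hwdef]
        simp [hii]
  -- epsilon perturbation
  set B := |∑ j, d j * K (t k₁) (x j)| with hBdef
  have hB0 : 0 ≤ B := abs_nonneg _
  set ε := min (1/2 : ℝ) ((ηstar - |e k₁|) / (2 * (B + 1))) with hεdef
  have hεpos : 0 < ε := lt_min (by norm_num) (div_pos (sub_pos.mpr hlt) (by positivity))
  have hεlt1 : ε < 1 := lt_of_le_of_lt (min_le_left _ _) (by norm_num)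
  have hηpos : 0 < ηstar := lt_of_le_of_lt (abs_nonneg _) hlt
  set c' : Fin n → ℝ := fun j => cstar j + ε * d j with hc'def
  have hge : ηstar ≤ Finset.univ.sup' Finset.univ_nonempty
      (fun k : Fin (n + 1) => |f (t k) - ∑ j, c' j * K (t k) (x j)|) :=
    hmin.2 ⟨c', rfl⟩
  have hub : Finset.univ.sup' Finset.univ_nonempty
      (fun k : Fin (n + 1) => |f (t k) - ∑ j, c' j * K (t k) (x j)|) < ηstar := by
    rw [Finset.sup'_lt_iff]
    intro k _
    have hsplit : f (t k) - ∑ j, c' j * K (t k) (x j)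
        = e k - ε * ∑ j, d j * K (t k) (x j) := by
      have hexp : ∑ j, c' j * K (t k) (x j)
          = ∑ j, cstar j * K (t k) (x j) + ε * ∑ j, d j * K (t k) (x j) := by
        rw [Finset.mul_sum, ← Finset.sum_add_distrib]
        exact Finset.sum_congr rfl fun j _ => by rw [hc'def]; ring
      rw [hexp, hedef]; ring
    rcases eq_or_ne k k₁ with heq | hk
    · subst heq
      rw [hsplit]
      have h1 : |e k - ε * ∑ j, d j * K (t k) (x j)| ≤ |e k| + ε * B := by
        refine (abs_sub _ _).trans ?_
        rw [abs_mul, abs_of_pos hεpos, hBdef]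
      refine lt_of_le_of_lt h1 ?_
      have hεB : ε * B < ηstar - |e k| := by
        have h2 : ε ≤ (ηstar - |e k|) / (2 * (B + 1)) := min_le_right _ _
        have h3 : ε * B ≤ (ηstar - |e k|) / (2 * (B + 1)) * B :=
          mul_le_mul_of_nonneg_right h2 hB0
        refine lt_of_le_of_lt h3 ?_
        rw [div_mul_eq_mul_div, div_lt_iff₀ (by positivity)]
        nlinarith [sub_pos.mpr hlt]
      linarith
    · rw [hsplit, hd k hk]
      have h1 : e k - ε * e k = (1 - ε) * e k := by ring
      rw [h1, abs_mul, abs_of_nonneg (by linarith : (0:ℝ) ≤ 1 - ε)]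
      calc (1 - ε) * |e k| ≤ (1 - ε) * ηstar :=
            mul_le_mul_of_nonneg_left (hle k) (by linarith)
        _ < ηstar := by nlinarith
  exact absurd (lt_of_le_of_lt hge hub) (lt_irrefl _)
end
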